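/- The derivative of the ESBIII CDF F(x) (given piecewise by F(x) = (1-ε)/2 + ((1+ε)/2)(1+(x/(1+ε))^{-c})^{-k} for x ≥ 0 and F(x) = ((1-ε)/2)(1-(1+(-x/(1-ε))^{-c})^{-k}) for x < 0) equals the ESBIII density f(x) = (ck/2)(sign(x)x/(1+sign(x)ε))^{-(c+1)}(1+(sign(x)x/(1+sign(x)ε))^{-c})^{-(k+1)} for all x ≠ 0. -/

import Mathlib

open Real

/-- sign function with sign(0) = 1, as in the paper. -/
noncomputable def sgn (x : ℝ) : ℝ := if x < 0 then -1 else 1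

/-- ESBIII CDF. -/
noncomputable def esbiiiCDF (c k ε : ℝ) (x : ℝ) : ℝ :=
  if 0 ≤ x then (1 - ε) / 2 + ((1 + ε) / 2) * (1 + (x / (1 + ε)) ^ (-c)) ^ (-k)
  else ((1 - ε) / 2) * (1 - (1 + (-x / (1 - ε)) ^ (-c)) ^ (-k))

/-!
On each half-line the ESBIII CDF is an affine image of the Burr type III CDF
`t ↦ (1 + t^(-c))^(-k)` evaluated at `x / (1 + ε)` (resp. `x / (ε - 1)`), so the claim is the
chain rule applied to the derivative of the Burr III CDF, which is its density.
-/

noncomputable def burrIIICDF (c k t : ℝ) : ℝ := (1 + t ^ (-c)) ^ (-k)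

noncomputable def burrIIIPDF (c k t : ℝ) : ℝ :=
  c * k * t ^ (-(c + 1)) * (1 + t ^ (-c)) ^ (-(k + 1))

theorem hasDerivAt_burrIIICDF (c k : ℝ) {t : ℝ} (ht : 0 < t) :
    HasDerivAt (burrIIICDF c k) (burrIIIPDF c k t) t := by
  have hbase : 0 < 1 + t ^ (-c) := by positivity
  refine ((((hasDerivAt_id t).rpow_const (p := -c) (Or.inl ht.ne')).const_add 1).rpow_const
    (p := -k) (Or.inl hbase.ne')).congr_deriv ?_
  simp only [burrIIIPDF, id, neg_add']
  ring

theorem hasDerivAt_burrIIICDF_div (c k : ℝ) {a x : ℝ} (hx : 0 < x / a) :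
    HasDerivAt (fun y => burrIIICDF c k (y / a)) (burrIIIPDF c k (x / a) / a) x := by
  have h := (hasDerivAt_burrIIICDF c k hx).comp x ((hasDerivAt_id' x).div_const a)
  rwa [mul_one_div] at h

theorem esbiiiCDF_eventuallyEq_of_pos (c k ε : ℝ) {x : ℝ} (hx : 0 < x) :
    esbiiiCDF c k ε =ᶠ[nhds x]
      fun y => (1 - ε) / 2 + (1 + ε) / 2 * burrIIICDF c k (y / (1 + ε)) := by
  filter_upwards [eventually_gt_nhds hx] with y hy
  simp [esbiiiCDF, burrIIICDF, hy.le]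

theorem esbiiiCDF_eventuallyEq_of_neg (c k ε : ℝ) {x : ℝ} (hx : x < 0) :
    esbiiiCDF c k ε =ᶠ[nhds x]
      fun y => (1 - ε) / 2 * (1 - burrIIICDF c k (y / (ε - 1))) := by
  filter_upwards [eventually_lt_nhds hx] with y hy
  rw [esbiiiCDF, if_neg hy.not_ge, burrIIICDF, ← neg_div_neg_eq y, neg_sub]

theorem esbiii_cdf_deriv (c k ε : ℝ)
    (hε : ε ∈ Set.Ioo (-1 : ℝ) 1) :
    ∀ x : ℝ, x ≠ 0 →
      HasDerivAt (esbiiiCDF c k ε)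
        ((c * k / 2) * ((sgn x * x) / (1 + sgn x * ε)) ^ (-(c + 1)) *
          (1 + ((sgn x * x) / (1 + sgn x * ε)) ^ (-c)) ^ (-(k + 1))) x := by
  obtain ⟨hε₁, hε₂⟩ := hε
  intro x hx
  rcases hx.lt_or_gt with hneg | hpos
  · have hu : 0 < x / (ε - 1) := div_pos_of_neg_of_neg hneg (by linarith)
    refine ((((hasDerivAt_burrIIICDF_div c k hu).const_sub 1).const_mul ((1 - ε) / 2))
      |>.congr_of_eventuallyEq (esbiiiCDF_eventuallyEq_of_neg c k ε hneg)).congr_deriv ?_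
    have hsgn : sgn x * x / (1 + sgn x * ε) = x / (ε - 1) := by
      rw [sgn, if_pos hneg, neg_one_mul, neg_one_mul, ← sub_eq_add_neg, ← neg_sub,
        neg_div_neg_eq]
    have hε' : ε - 1 ≠ 0 := by linarith
    rw [hsgn, burrIIIPDF]
    field_simp
    ring
  · have hu : 0 < x / (1 + ε) := div_pos hpos (by linarith)
    refine ((((hasDerivAt_burrIIICDF_div c k hu).const_mul ((1 + ε) / 2)).const_add ((1 - ε) / 2))
      |>.congr_of_eventuallyEq (esbiiiCDF_eventuallyEq_of_pos c k ε hpos)).congr_deriv ?_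
    have hsgn : sgn x * x / (1 + sgn x * ε) = x / (1 + ε) := by
      rw [sgn, if_neg hpos.not_gt, one_mul, one_mul]
    have hε' : 1 + ε ≠ 0 := by linarith
    rw [hsgn, burrIIIPDF]
    field_simp
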